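/- Let W_p = (⊕_{n∈ℕ} ℓ∞ⁿ)_{ℓ_p} for p ∈ (1,∞), and let T ∈ B(W_p). If the identity operator on W_p factors through T (i.e. I = STR for some bounded S, R on W_p), then there exists C ≥ 1 such that T C-fixes a copy of ℓ∞ⁿ for every n ∈ ℕ. -/

import Mathlib

/-!
If `S T R = I`, then for any isometric copy `J(E)` of a space `E` inside `W_p` we have
`‖v‖ = ‖S T R J v‖ ≤ ‖S‖ ‖T R J v‖` and `‖R J‖ ≤ ‖R‖`, so `T` fixes the copy `R J(E)` with the
constant `max (1, ‖R‖, ‖S‖)`, independently of `E`. Applying this to the isometric embeddings of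
`ℓ∞ⁿ` into the summands of `W_p` gives the theorem.
-/

open scoped ENNReal

open Function in
theorem Function.Injective.norm_extend_zero {ι η E : Type*} [Fintype ι] [Fintype η]
    [SeminormedAddCommGroup E] {e : ι → η} (he : Injective e) (v : ι → E) :
    ‖extend e v 0‖ = ‖v‖ := by
  refine le_antisymm ((pi_norm_le_iff_of_nonneg (norm_nonneg v)).2 fun j => ?_)
    ((pi_norm_le_iff_of_nonneg (norm_nonneg _)).2 fun i => ?_)
  · by_cases hj : ∃ i, e i = j
    · obtain ⟨i, rfl⟩ := hj
      rw [he.extend_apply]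
      exact norm_le_pi_norm v i
    · rw [extend_apply' _ _ _ hj, Pi.zero_apply, norm_zero]
      exact norm_nonneg v
  · rw [← he.extend_apply v 0]
    exact norm_le_pi_norm _ _

noncomputable def Function.ExtendByZero.linearIsometry (R : Type*) [SeminormedRing R]
    {ι η : Type*} [Fintype ι] [Fintype η] {e : ι → η} (he : Function.Injective e) :
    (ι → R) →ₗᵢ[R] η → R where
  toLinearMap := Function.ExtendByZero.linearMap R e
  norm_map' := he.norm_extend_zero

noncomputable def lp.singleLinearIsometry (𝕜 : Type*) {α : Type*} (E : α → Type*) (p : ℝ≥0∞)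
    [NormedRing 𝕜] [∀ i, NormedAddCommGroup (E i)] [∀ i, Module 𝕜 (E i)]
    [∀ i, IsBoundedSMul 𝕜 (E i)] [DecidableEq α] [Fact (1 ≤ p)] (i : α) :
    E i →ₗᵢ[𝕜] lp E p where
  toLinearMap := lp.lsingle p i
  norm_map' := lp.norm_single (zero_lt_one.trans_le Fact.out) i

section FixesCopy

variable {𝕜 : Type*} [NontriviallyNormedField 𝕜]
  {X Y : Type*} [SeminormedAddCommGroup X] [SeminormedAddCommGroup Y]
  [NormedSpace 𝕜 X] [NormedSpace 𝕜 Y]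

def FixesCopy (C : ℝ) (T : X →L[𝕜] Y) (E : Type*) [SeminormedAddCommGroup E]
    [NormedSpace 𝕜 E] : Prop :=
  ∃ R : E →L[𝕜] X, ‖R‖ ≤ C ∧ ∀ v : E, (1 / C) * ‖v‖ ≤ ‖T (R v)‖

variable {Z E : Type*} [SeminormedAddCommGroup Z] [SeminormedAddCommGroup E]
  [NormedSpace 𝕜 Z] [NormedSpace 𝕜 E]

theorem fixesCopy_of_comp_eq_id {T : X →L[𝕜] Y} {R : Z →L[𝕜] X} {S : Y →L[𝕜] Z}
    (hSTR : S.comp (T.comp R) = .id 𝕜 Z) (J : E →ₗᵢ[𝕜] Z) {C : ℝ} (hR : ‖R‖ ≤ C)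
    (hS : ‖S‖ ≤ C) : FixesCopy C T E := by
  refine ⟨R.comp J.toContinuousLinearMap, ?_, fun v => ?_⟩
  · calc ‖R.comp J.toContinuousLinearMap‖ ≤ ‖R‖ * ‖J.toContinuousLinearMap‖ :=
          R.opNorm_comp_le _
      _ ≤ ‖R‖ * 1 := by gcongr; exact J.norm_toContinuousLinearMap_le
      _ ≤ C := by rwa [mul_one]
  · have hSTRv : S (T (R (J v))) = J v := congr($hSTR (J v))
    rw [one_div_mul_eq_div]
    refine div_le_of_le_mul₀ ((norm_nonneg R).trans hR) (norm_nonneg _) ?_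
    calc ‖v‖ = ‖S (T (R (J v)))‖ := by rw [hSTRv, J.norm_map]
      _ ≤ ‖S‖ * ‖T (R (J v))‖ := S.le_opNorm _
      _ ≤ C * ‖T (R (J v))‖ := by gcongr
      _ = ‖T (R.comp J.toContinuousLinearMap v)‖ * C := mul_comm _ _

end FixesCopy

theorem fixes_linftyn_of_identity_factors_general {𝕜 : Type*} [RCLike 𝕜]
    (p : ℝ≥0∞) [Fact (1 ≤ p)]
    (T : lp (fun n : ℕ => Fin (n + 1) → 𝕜) p →L[𝕜] lp (fun n : ℕ => Fin (n + 1) → 𝕜) p)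
    (hfactor : ∃ R S : lp (fun n : ℕ => Fin (n + 1) → 𝕜) p →L[𝕜]
        lp (fun n : ℕ => Fin (n + 1) → 𝕜) p,
      S.comp (T.comp R) = ContinuousLinearMap.id 𝕜 (lp (fun n : ℕ => Fin (n + 1) → 𝕜) p)) :
    ∃ C : ℝ, 1 ≤ C ∧ ∀ n : ℕ,
      ∃ R : (Fin n → 𝕜) →L[𝕜] lp (fun n : ℕ => Fin (n + 1) → 𝕜) p,
        ‖R‖ ≤ C ∧ ∀ v : Fin n → 𝕜, (1 / C) * ‖v‖ ≤ ‖T (R v)‖ := by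
  obtain ⟨R, S, hSTR⟩ := hfactor
  refine ⟨max 1 (max ‖R‖ ‖S‖), le_max_left _ _, fun n => ?_⟩
  let ι : (Fin n → 𝕜) →ₗᵢ[𝕜] lp (fun n : ℕ => Fin (n + 1) → 𝕜) p :=
    (lp.singleLinearIsometry 𝕜 _ p n).comp
      (Function.ExtendByZero.linearIsometry 𝕜 (Fin.castSucc_injective n))
  exact fixesCopy_of_comp_eq_id hSTR ι (le_max_of_le_right (le_max_left _ _))
    (le_max_of_le_right (le_max_right _ _))

/-- Let `W_p = (⊕ₙ ℓ∞ⁿ)_{ℓ_p}` for `p ∈ (1,∞)` and `T ∈ B(W_p)`. If the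
identity on `W_p` factors through `T` (`I = S T R`), then there is `C ≥ 1` such that `T`
`C`-fixes a copy of `ℓ∞ⁿ` for every `n`. Here `ℓ∞ⁿ = Fin n → 𝕜` with the sup norm. -/
theorem fixes_linftyn_of_identity_factors {𝕜 : Type*} [RCLike 𝕜]
    (p : ℝ≥0∞) [Fact (1 ≤ p)] (hp1 : 1 < p) (hptop : p ≠ ∞)
    (T : lp (fun n : ℕ => Fin (n + 1) → 𝕜) p →L[𝕜] lp (fun n : ℕ => Fin (n + 1) → 𝕜) p)
    (hfactor : ∃ R S : lp (fun n : ℕ => Fin (n + 1) → 𝕜) p →L[𝕜]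
        lp (fun n : ℕ => Fin (n + 1) → 𝕜) p,
      S.comp (T.comp R) = ContinuousLinearMap.id 𝕜 (lp (fun n : ℕ => Fin (n + 1) → 𝕜) p)) :
    ∃ C : ℝ, 1 ≤ C ∧ ∀ n : ℕ,
      ∃ R : (Fin n → 𝕜) →L[𝕜] lp (fun n : ℕ => Fin (n + 1) → 𝕜) p,
        ‖R‖ ≤ C ∧ ∀ v : Fin n → 𝕜, (1 / C) * ‖v‖ ≤ ‖T (R v)‖ :=
  fixes_linftyn_of_identity_factors_general p T hfactor
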